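/- Let Ω be a compact metric space with a finite Borel measure μ, k : Ω × Ω → ℝ continuous, x₁, …, xₙ ∈ Ω with invertible Gram matrix G_{ij} = k(x_i, x_j), f : Ω → ℝ continuous, Y = (f(x₁), …, f(xₙ)), and S(g)(x) := g(x) + Σᵢ,ⱼ k(x, xᵢ)(G⁻¹)_{ij}(Yⱼ − g(xⱼ)) for continuous g : Ω → ℝ. Let (Ω', ℱ, P) be a probability space and W : Ω' → C(Ω, ℝ) a Bochner-integrable random continuous function with E[W] = 0 and E[‖W‖_∞²] < ∞. Then the expected generalization error with random initial output is at least that with zero initial output: E[‖S(W) − f‖²_{L²(μ)}] ≥ ‖S(0) − f‖²_{L²(μ)}, with equality if and only if W(ω) − Σᵢ,ⱼ k(·, xᵢ)(G⁻¹)_{ij} W(ω)(xⱼ) = 0 in L²(μ) for P-almost every ω. -/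

import Mathlib

/-!
The trained output is affine in the initial output: `S g - f = (S 0 - f) + (g - T g)`, and
`g ↦ g - T g` is a continuous linear map `Ψ` from `C(Ω, ℝ)` to `L²(μ)`. Hence
`E‖S W - f‖² = ‖S 0 - f‖² + 2 E⟪S 0 - f, Ψ W⟫ + E‖Ψ W‖²`, and the cross term vanishes because
`E (Ψ W) = Ψ (E W) = 0`. What remains is the variance term `E‖Ψ W‖² ≥ 0`, which is zero exactly
when `Ψ W = 0` almost surely.
-/

open Matrix MeasureTheory

section BiasVariance

variable {Ω' E : Type*} [MeasurableSpace Ω'] {P : Measure Ω'} [IsProbabilityMeasure P]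
  [NormedAddCommGroup E] [InnerProductSpace ℝ E] [CompleteSpace E]

theorem integral_norm_add_sq_of_integral_eq_zero (a : E) {Z : Ω' → E} (hZ : Integrable Z P)
    (hZmean : ∫ ω, Z ω ∂P = 0) (hZsq : Integrable (fun ω => ‖Z ω‖ ^ 2) P) :
    ∫ ω, ‖a + Z ω‖ ^ 2 ∂P = ‖a‖ ^ 2 + ∫ ω, ‖Z ω‖ ^ 2 ∂P := by
  have hcross : ∫ ω, 2 * inner ℝ a (Z ω) ∂P = 0 := by
    rw [integral_const_mul, integral_inner hZ, hZmean, inner_zero_right, mul_zero]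
  have hcross_int : Integrable (fun ω => 2 * inner ℝ a (Z ω)) P :=
    (hZ.const_inner a).const_mul 2
  simp_rw [norm_add_sq_real]
  rw [integral_add (f := fun ω => ‖a‖ ^ 2 + 2 * inner ℝ a (Z ω))
      ((integrable_const _).add hcross_int) hZsq,
    integral_add (integrable_const _) hcross_int, hcross, integral_const, probReal_univ,
    one_smul, add_zero]

theorem sq_norm_le_integral_norm_add_sq (a : E) {Z : Ω' → E} (hZ : Integrable Z P)
    (hZmean : ∫ ω, Z ω ∂P = 0) (hZsq : Integrable (fun ω => ‖Z ω‖ ^ 2) P) :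
    ‖a‖ ^ 2 ≤ ∫ ω, ‖a + Z ω‖ ^ 2 ∂P := by
  rw [integral_norm_add_sq_of_integral_eq_zero a hZ hZmean hZsq]
  exact le_add_of_nonneg_right (integral_nonneg fun ω => sq_nonneg _)

theorem integral_norm_add_sq_eq_iff (a : E) {Z : Ω' → E} (hZ : Integrable Z P)
    (hZmean : ∫ ω, Z ω ∂P = 0) (hZsq : Integrable (fun ω => ‖Z ω‖ ^ 2) P) :
    ∫ ω, ‖a + Z ω‖ ^ 2 ∂P = ‖a‖ ^ 2 ↔ ∀ᵐ ω ∂P, Z ω = 0 := by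
  rw [integral_norm_add_sq_of_integral_eq_zero a hZ hZmean hZsq, add_eq_left,
    integral_eq_zero_iff_of_nonneg (fun ω => sq_nonneg _) hZsq]
  simp only [Filter.EventuallyEq, Pi.zero_apply, sq_eq_zero_iff, norm_eq_zero]

end BiasVariance

theorem ContinuousLinearMap.integrable_norm_comp_sq {α E F : Type*} [MeasurableSpace α]
    {P : Measure α} [NormedAddCommGroup E] [NormedSpace ℝ E] [NormedAddCommGroup F]
    [NormedSpace ℝ F] (L : E →L[ℝ] F) {W : α → E} (hW : AEStronglyMeasurable W P)
    (hWsq : Integrable (fun ω => ‖W ω‖ ^ 2) P) :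
    Integrable (fun ω => ‖L (W ω)‖ ^ 2) P := by
  rw [← memLp_two_iff_integrable_sq_norm (L.continuous.comp_aestronglyMeasurable hW)]
  exact L.comp_memLp' ((memLp_two_iff_integrable_sq_norm hW).2 hWsq)

theorem ContinuousMap.integral_sq_eq_norm_toLp_sq {X : Type*} [TopologicalSpace X]
    [CompactSpace X] [MeasurableSpace X] [BorelSpace X] (μ : Measure X) [IsFiniteMeasure μ]
    (g : C(X, ℝ)) :
    ∫ y, g y ^ 2 ∂μ = ‖ContinuousMap.toLp 2 μ ℝ g‖ ^ 2 := by
  rw [← real_inner_self_eq_norm_sq, ContinuousMap.inner_toLp]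
  simp [sq]

section KernelInterpolation

variable {X ι : Type*} [TopologicalSpace X] [Fintype ι]

/-- With `κ i = k(·, x i)` and `A = G⁻¹` this is `T g = k(·, X) G⁻¹ g(X)`, the kernel
interpolant of the values of `g` at the points `x`. -/
noncomputable def kernelInterpolation (κ : ι → C(X, ℝ)) (x : ι → X) (A : Matrix ι ι ℝ) :
    C(X, ℝ) →L[ℝ] C(X, ℝ) :=
  ∑ i, ∑ j, A i j • (ContinuousMap.evalCLM ℝ (x j)).smulRight (κ i)

theorem kernelInterpolation_apply (κ : ι → C(X, ℝ)) (x : ι → X) (A : Matrix ι ι ℝ)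
    (g : C(X, ℝ)) (y : X) :
    kernelInterpolation κ x A g y = ∑ i, ∑ j, κ i y * A i j * g (x j) := by
  simp only [kernelInterpolation, _root_.sum_apply, _root_.smul_apply,
    ContinuousLinearMap.smulRight_apply, ContinuousMap.evalCLM_apply, ContinuousMap.sum_apply,
    ContinuousMap.coe_smul, Pi.smul_apply, smul_eq_mul]
  exact Finset.sum_congr rfl fun i _ => Finset.sum_congr rfl fun j _ => by ring

end KernelInterpolation

theorem stmt17_general {Ω : Type*} [MetricSpace Ω] [CompactSpace Ω]
    [MeasurableSpace Ω] [BorelSpace Ω]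
    (μ : Measure Ω) [IsFiniteMeasure μ]
    {n : ℕ} (k : Ω → Ω → ℝ)
    (hk : Continuous fun p : Ω × Ω => k p.1 p.2)
    (x : Fin n → Ω)
    (G : Matrix (Fin n) (Fin n) ℝ)
    (f : Ω → ℝ) (hf : Continuous f)
    (S T : C(Ω, ℝ) → Ω → ℝ)
    (hS : ∀ (g : C(Ω, ℝ)) (x' : Ω),
      S g x' = g x' + ∑ i, ∑ j, k x' (x i) * G⁻¹ i j * (f (x j) - g (x j)))
    (hT : ∀ (g : C(Ω, ℝ)) (x' : Ω),
      T g x' = ∑ i, ∑ j, k x' (x i) * G⁻¹ i j * g (x j))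
    {Ω' : Type*} [MeasurableSpace Ω']
    (P : Measure Ω') [IsProbabilityMeasure P]
    (W : Ω' → C(Ω, ℝ)) (hWint : Integrable W P)
    (hWmean : (∫ ω, W ω ∂P) = 0)
    (hWsq : Integrable (fun ω => ‖W ω‖ ^ 2) P) :
    (∫ x', (S 0 x' - f x') ^ 2 ∂μ)
      ≤ (∫ ω, (∫ x', (S (W ω) x' - f x') ^ 2 ∂μ) ∂P) ∧
    ((∫ ω, (∫ x', (S (W ω) x' - f x') ^ 2 ∂μ) ∂P)
        = (∫ x', (S 0 x' - f x') ^ 2 ∂μ) ↔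
      ∀ᵐ ω ∂P, (∫ x', (W ω x' - T (W ω) x') ^ 2 ∂μ) = 0) := by
  let κ : Fin n → C(Ω, ℝ) := fun i =>
    ⟨fun y => k y (x i), hk.comp (continuous_id.prodMk continuous_const)⟩
  let K := kernelInterpolation κ x G⁻¹
  let F : C(Ω, ℝ) := ⟨f, hf⟩
  let Ψ : C(Ω, ℝ) →L[ℝ] Lp ℝ 2 μ := (ContinuousMap.toLp 2 μ ℝ).comp (1 - K)
  let a : Lp ℝ 2 μ := ContinuousMap.toLp 2 μ ℝ (K F - F)
  have hT_norm (g : C(Ω, ℝ)) : ∫ y, (g y - T g y) ^ 2 ∂μ = ‖Ψ g‖ ^ 2 := by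
    rw [show Ψ g = ContinuousMap.toLp 2 μ ℝ (g - K g) from rfl,
      ← ContinuousMap.integral_sq_eq_norm_toLp_sq]
    simp only [ContinuousMap.sub_apply, hT, K, kernelInterpolation_apply]
    rfl
  have hS_norm (g : C(Ω, ℝ)) : ∫ y, (S g y - f y) ^ 2 ∂μ = ‖a + Ψ g‖ ^ 2 := by
    rw [show a + Ψ g = ContinuousMap.toLp 2 μ ℝ (K F - F + (g - K g)) from (map_add _ _ _).symm,
      ← ContinuousMap.integral_sq_eq_norm_toLp_sq]
    simp only [ContinuousMap.add_apply, ContinuousMap.sub_apply, hS, K, kernelInterpolation_apply]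
    congr 1 with y
    simp only [mul_sub, Finset.sum_sub_distrib, κ, F, ContinuousMap.coe_mk]
    ring
  have hΨW : Integrable (fun ω => Ψ (W ω)) P := Ψ.integrable_comp hWint
  have hΨW_mean : ∫ ω, Ψ (W ω) ∂P = 0 := by
    rw [Ψ.integral_comp_comm hWint, hWmean, map_zero]
  have hΨW_sq := Ψ.integrable_norm_comp_sq hWint.aestronglyMeasurable hWsq
  simp_rw [hS_norm, hT_norm, map_zero, add_zero, sq_eq_zero_iff, norm_eq_zero]
  exact ⟨sq_norm_le_integral_norm_add_sq a hΨW hΨW_mean hΨW_sq,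
    integral_norm_add_sq_eq_iff a hΨW hΨW_mean hΨW_sq⟩

/-- Harm of a random nonzero initial output in the NTK regime: for the trained output
`S(g) = g + k(·,X)G⁻¹(Y - g(X))` and `T(g) = k(·,X)G⁻¹ g(X)`, a Bochner-mean-zero
random continuous initial output `W` satisfies
`E‖S(W) - f‖²_{L²(μ)} ≥ ‖S(0) - f‖²_{L²(μ)}`, with equality if and only if
`W(ω) - T(W(ω)) = 0` in `L²(μ)` for `P`-almost every `ω`. -/
theorem stmt17 {Ω : Type*} [MetricSpace Ω] [CompactSpace Ω]
    [MeasurableSpace Ω] [BorelSpace Ω]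
    (μ : Measure Ω) [IsFiniteMeasure μ]
    {n : ℕ} (k : Ω → Ω → ℝ)
    (hk : Continuous fun p : Ω × Ω => k p.1 p.2)
    (x : Fin n → Ω)
    (G : Matrix (Fin n) (Fin n) ℝ) (hG : ∀ i j, G i j = k (x i) (x j))
    (hGinv : IsUnit G)
    (f : Ω → ℝ) (hf : Continuous f)
    (S T : C(Ω, ℝ) → Ω → ℝ)
    (hS : ∀ (g : C(Ω, ℝ)) (x' : Ω),
      S g x' = g x' + ∑ i, ∑ j, k x' (x i) * G⁻¹ i j * (f (x j) - g (x j)))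
    (hT : ∀ (g : C(Ω, ℝ)) (x' : Ω),
      T g x' = ∑ i, ∑ j, k x' (x i) * G⁻¹ i j * g (x j))
    {Ω' : Type*} [MeasurableSpace Ω']
    (P : Measure Ω') [IsProbabilityMeasure P]
    (W : Ω' → C(Ω, ℝ)) (hWint : Integrable W P)
    (hWmean : (∫ ω, W ω ∂P) = 0)
    (hWsq : Integrable (fun ω => ‖W ω‖ ^ 2) P) :
    (∫ x', (S 0 x' - f x') ^ 2 ∂μ)
      ≤ (∫ ω, (∫ x', (S (W ω) x' - f x') ^ 2 ∂μ) ∂P) ∧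
    ((∫ ω, (∫ x', (S (W ω) x' - f x') ^ 2 ∂μ) ∂P)
        = (∫ x', (S 0 x' - f x') ^ 2 ∂μ) ↔
      ∀ᵐ ω ∂P, (∫ x', (W ω x' - T (W ω) x') ^ 2 ∂μ) = 0) :=
  stmt17_general μ k hk x G f hf S T hS hT P W hWint hWmean hWsq
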